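/- Let g : G_ℤ → ℤ be the group homomorphism determined on basis elements by g(X_k) = 1 + |k| and g(Y_k) = −1 − |k| for all k ∈ ℤ. Then |g(r)| ≤ 1 for every r ∈ R. -/
import Mathlib


/-- `X k` is the basis element of the free abelian group on `Bool × ℤ` indexed by `(true, k)`. -/
def X (k : ℤ) : FreeAbelianGroup (Bool × ℤ) := FreeAbelianGroup.of (true, k)

/-- `Y k` is the basis element of the free abelian group on `Bool × ℤ` indexed by `(false, k)`. -/
def Y (k : ℤ) : FreeAbelianGroup (Bool × ℤ) := FreeAbelianGroup.of (false, k)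

/-- The set of elements of the forms `X 0`, `Y 0`, `X k + Y k`, `X k + Y (k+1)`,
`X k - X (k+1)`, `Y k - Y (k+1)`. -/
def R₀ : Set (FreeAbelianGroup (Bool × ℤ)) :=
  {v | v = X 0 ∨ v = Y 0 ∨ (∃ k : ℤ, v = X k + Y k) ∨ (∃ k : ℤ, v = X k + Y (k + 1)) ∨
       (∃ k : ℤ, v = X k - X (k + 1)) ∨ (∃ k : ℤ, v = Y k - Y (k + 1))}

/-- `R` consists of the elements of `R₀` together with their negatives. -/
def R : Set (FreeAbelianGroup (Bool × ℤ)) := R₀ ∪ (-R₀)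

lemma aux_g0 (g : FreeAbelianGroup (Bool × ℤ) →+ ℤ)
    (hX : ∀ k : ℤ, g (X k) = 1 + |k|) (hY : ∀ k : ℤ, g (Y k) = -1 - |k|) :
    ∀ r ∈ R₀, |g r| ≤ 1 := by
  rintro r (rfl | rfl | ⟨k, rfl⟩ | ⟨k, rfl⟩ | ⟨k, rfl⟩ | ⟨k, rfl⟩) <;>
    simp only [map_add, map_sub, hX, hY]
  case _ => norm_num
  case _ => norm_num
  case _ => rw [abs_le]; omega
  all_goals {
    have h1 : |k + 1| - |k| ≤ 1 := by
      have := abs_sub_abs_le_abs_sub (k+1) k; simpa using this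
    have h2 : |k| - |k + 1| ≤ 1 := by
      have := abs_sub_abs_le_abs_sub k (k+1); simpa using this
    rw [abs_le]; omega }

theorem abs_g_le_one (g : FreeAbelianGroup (Bool × ℤ) →+ ℤ)
    (hX : ∀ k : ℤ, g (X k) = 1 + |k|) (hY : ∀ k : ℤ, g (Y k) = -1 - |k|) :
    ∀ r ∈ R, |g r| ≤ 1 := by
  rintro r (hr | hr)
  · exact aux_g0 g hX hY r hr
  · rw [Set.mem_neg] at hr
    have := aux_g0 g hX hY (-r) hr
    rwa [map_neg, abs_neg] at this
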